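/- arXiv:1706.00483 — 8 statements merged into one kernel-verified Lean document; each statement's English description precedes it below -/
import Mathlib

section
/- Let τ > 0 and define H : ℝ² → ℝ by H(p) = 1/τ − √(((1+τ)/τ)² + (2/τ)|p|²). Then for every p ∈ ℝ² \ {0}, the implicit relation τ/(1+τ) = ⨍_{S^1} dv/(−H(p) + 1/τ + √(2/τ) v·p) holds. -/
/-!
Parametrize the unit circle by the angle `θ ↦ (cos θ, sin θ)`. Integrating a function of the form
`F (x / ‖x‖) g ‖x‖` over the plane once with `toSphere` and once in polar coordinates shows that
`volume.toSphere` is arc length. Writing `q = ‖q‖ (cos φ, sin φ)`, the spherical average of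
`1 / (s + ⟪v, q⟫)` becomes `(2π)⁻¹ ∫_{-π}^{π} dθ / (s + ‖q‖ cos (θ - φ))`; periodicity removes `φ`
and the substitution `t = tan (θ / 2)` gives `1 / √(s² - ‖q‖²)`. For `s = -H p + 1 / τ` and
`q = √(2 / τ) • p` one has `s² - ‖q‖² = ((1 + τ) / τ)²`.
-/

open MeasureTheory Metric RealInnerProductSpace Set Real Filter Topology

section CosineIntegral

variable {s b : ℝ}

lemma add_mul_cos_pos (hb : |b| < s) (θ : ℝ) : 0 < s + b * cos θ := by
  have : |b * cos θ| ≤ |b| := by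
    rw [abs_mul]; exact mul_le_of_le_one_right (abs_nonneg b) (abs_cos_le_one θ)
  linarith [neg_abs_le (b * cos θ)]

/-- The primitive comes from the substitution `t = tan (θ / 2)`. -/
lemma hasDerivAt_arctan_mul_tan_half (hb : |b| < s) {θ : ℝ} (hθ : θ ∈ Ioo (-π) π) :
    HasDerivAt (fun x ↦ 2 / √(s ^ 2 - b ^ 2) * arctan (√((s - b) / (s + b)) * tan (x / 2)))
      (s + b * cos θ)⁻¹ θ := by
  have hsub : 0 < s - b := by linarith [le_abs_self b]
  have hadd : 0 < s + b := by linarith [neg_abs_le b]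
  set k := √((s - b) / (s + b))
  have hk : 0 < k := sqrt_pos.2 (div_pos hsub hadd)
  have hk2 : k ^ 2 = (s - b) / (s + b) := sq_sqrt (div_pos hsub hadd).le
  have hkD : k * (s + b) = √(s ^ 2 - b ^ 2) := by
    rw [← sqrt_sq hadd.le, ← sqrt_mul (div_pos hsub hadd).le]
    congr 1
    field_simp
    ring
  have hcos : cos (θ / 2) ≠ 0 :=
    (cos_pos_of_mem_Ioo ⟨by linarith [hθ.1], by linarith [hθ.2]⟩).ne'
  have htan : HasDerivAt (fun x ↦ tan (x / 2)) ((cos (θ / 2) ^ 2)⁻¹ * 2⁻¹) θ := by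
    simpa [Function.comp_def] using (hasDerivAt_tan hcos).comp θ ((hasDerivAt_id θ).div_const 2)
  refine ((htan.const_mul k).arctan.const_mul (2 / √(s ^ 2 - b ^ 2))).congr_deriv ?_
  have hden : cos (θ / 2) ^ 2 + k ^ 2 * sin (θ / 2) ^ 2 = (s + b * cos θ) / (s + b) := by
    have hcos2 : cos θ = 2 * cos (θ / 2) ^ 2 - 1 := by rw [← cos_two_mul]; ring_nf
    rw [hk2, sin_sq, hcos2]
    field_simp
    ring
  have hpos := add_mul_cos_pos hb θ
  rw [tan_eq_sin_div_cos, ← hkD]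
  field_simp
  rw [hden]
  field_simp

lemma tendsto_arctan_mul_tan_half_nhdsLT_pi {k : ℝ} (hk : 0 < k) :
    Tendsto (fun x ↦ arctan (k * tan (x / 2))) (𝓝[<] π) (𝓝 (π / 2)) := by
  have hhalf : Tendsto (· / 2) (𝓝[<] π) (𝓝[<] (π / 2)) :=
    tendsto_nhdsWithin_iff.2 ⟨(continuous_id.div_const 2).continuousAt.tendsto.mono_left
      nhdsWithin_le_nhds,
      eventually_nhdsWithin_of_forall fun x (hx : x < π) ↦ by simp only [mem_Iio]; linarith⟩
  exact (tendsto_arctan_atTop.mono_right nhdsWithin_le_nhds).comp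
    ((tendsto_tan_pi_div_two.comp hhalf).const_mul_atTop hk)

lemma tendsto_arctan_mul_tan_half_nhdsGT_neg_pi {k : ℝ} (hk : 0 < k) :
    Tendsto (fun x ↦ arctan (k * tan (x / 2))) (𝓝[>] (-π)) (𝓝 (-(π / 2))) := by
  have hhalf : Tendsto (· / 2) (𝓝[>] (-π)) (𝓝[>] (-(π / 2))) :=
    tendsto_nhdsWithin_iff.2 ⟨((continuous_id.div_const 2).tendsto' (-π) _ (neg_div 2 π)).mono_left
      nhdsWithin_le_nhds,
      eventually_nhdsWithin_of_forall fun x (hx : -π < x) ↦ by simp only [mem_Ioi]; linarith⟩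
  exact (tendsto_arctan_atBot.mono_right nhdsWithin_le_nhds).comp
    ((tendsto_tan_neg_pi_div_two.comp hhalf).const_mul_atBot hk)

theorem integral_inv_add_mul_cos (hb : |b| < s) :
    ∫ θ in (-π)..π, (s + b * cos θ)⁻¹ = 2 * π / √(s ^ 2 - b ^ 2) := by
  have hk : 0 < √((s - b) / (s + b)) :=
    sqrt_pos.2 (div_pos (by linarith [le_abs_self b]) (by linarith [neg_abs_le b]))
  have hcont : Continuous fun θ ↦ (s + b * cos θ)⁻¹ :=
    (continuous_const.add (continuous_const.mul continuous_cos)).inv₀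
      fun θ ↦ (add_mul_cos_pos hb θ).ne'
  rw [intervalIntegral.integral_eq_sub_of_hasDerivAt_of_tendsto (neg_lt_self pi_pos)
    (fun θ hθ ↦ hasDerivAt_arctan_mul_tan_half hb hθ) (hcont.intervalIntegrable _ _)
    ((tendsto_arctan_mul_tan_half_nhdsGT_neg_pi hk).const_mul _)
    ((tendsto_arctan_mul_tan_half_nhdsLT_pi hk).const_mul _)]
  ring

end CosineIntegral

theorem Function.Periodic.intervalIntegral_comp_sub_eq {E : Type*} [NormedAddCommGroup E]
    [NormedSpace ℝ E] {f : ℝ → E} {T : ℝ} (hf : Periodic f T) (t φ : ℝ) :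
    ∫ x in t..t + T, f (x - φ) = ∫ x in t..t + T, f x := by
  rw [intervalIntegral.integral_comp_sub_right, show t + T - φ = t - φ + T by ring,
    hf.intervalIntegral_add_eq (t - φ) t]

section SphereIntegral

lemma integral_volumeIoiPow (n : ℕ) (g : ℝ → ℝ) :
    ∫ r : Ioi (0 : ℝ), g r ∂Measure.volumeIoiPow n = ∫ r in Ioi 0, r ^ n * g r := by
  simp only [Measure.volumeIoiPow, ENNReal.ofReal]
  rw [integral_withDensity_eq_integral_smul (measurable_subtype_coe.pow_const _).real_toNNReal,
    integral_subtype_comap measurableSet_Ioi fun r ↦ (r ^ n).toNNReal • g r]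
  refine setIntegral_congr_fun measurableSet_Ioi fun r (hr : 0 < r) ↦ ?_
  rw [NNReal.smul_def, Real.coe_toNNReal _ (pow_nonneg hr.le n), smul_eq_mul]

variable {E : Type*} [NormedAddCommGroup E] [NormedSpace ℝ E] [Nontrivial E]
  [FiniteDimensional ℝ E] [MeasurableSpace E] [BorelSpace E]

theorem integral_comp_smul_norm_inv_mul (μ : Measure E) [μ.IsAddHaarMeasure] (F : E → ℝ)
    (g : ℝ → ℝ) :
    ∫ x, F (‖x‖⁻¹ • x) * g ‖x‖ ∂μ =
      (∫ v : sphere (0 : E) 1, F v ∂μ.toSphere) *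
        ∫ r in Ioi 0, r ^ (Module.finrank ℝ E - 1) * g r :=
  calc ∫ x, F (‖x‖⁻¹ • x) * g ‖x‖ ∂μ
      = ∫ x : ({0}ᶜ : Set E), F (‖x.1‖⁻¹ • x.1) * g ‖x.1‖ ∂μ.comap (↑) := by
        rw [integral_subtype_comap (measurableSet_singleton _).compl
          fun x ↦ F (‖x‖⁻¹ • x) * g ‖x‖, restrict_compl_singleton]
    _ = ∫ x, F x.1 * g x.2 ∂μ.toSphere.prod (.volumeIoiPow (Module.finrank ℝ E - 1)) := by
        simpa using μ.measurePreserving_homeomorphUnitSphereProd.integral_comp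
          (Homeomorph.measurableEmbedding _) fun x ↦ F x.1 * g x.2
    _ = _ := by
        rw [integral_prod_mul (fun v : sphere (0 : E) 1 ↦ F v) (fun r : Ioi (0 : ℝ) ↦ g r),
          integral_volumeIoiPow]

end SphereIntegral

lemma integral_euclideanSpace_fin_two {G : Type*} [NormedAddCommGroup G] [NormedSpace ℝ G]
    (f : EuclideanSpace ℝ (Fin 2) → G) : ∫ x, f x = ∫ q : ℝ × ℝ, f !₂[q.1, q.2] := by
  let e : ℝ × ℝ ≃ᵐ EuclideanSpace ℝ (Fin 2) :=
    MeasurableEquiv.finTwoArrow.symm.trans (MeasurableEquiv.toLp 2 _)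
  have he : MeasurePreserving e :=
    (PiLp.volume_preserving_toLp (Fin 2)).comp (volume_preserving_finTwoArrow ℝ).symm
  exact (he.integral_comp' f).symm

lemma norm_cos_sin (θ : ℝ) : ‖!₂[cos θ, sin θ]‖ = 1 := by
  simp [EuclideanSpace.norm_eq, Fin.sum_univ_two]

theorem integral_comp_smul_norm_inv_mul_fin_two (F : EuclideanSpace ℝ (Fin 2) → ℝ)
    (g : ℝ → ℝ) :
    ∫ x, F (‖x‖⁻¹ • x) * g ‖x‖ =
      (∫ r in Ioi 0, r * g r) * ∫ θ in (-π)..π, F !₂[cos θ, sin θ] := by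
  rw [integral_euclideanSpace_fin_two, ← integral_comp_polarCoord_symm, polarCoord_target,
    intervalIntegral.integral_of_le (neg_le_self pi_pos.le), integral_Ioc_eq_integral_Ioo,
    Measure.volume_eq_prod, ← setIntegral_prod_mul]
  refine setIntegral_congr_fun (measurableSet_Ioi.prod measurableSet_Ioo) fun q hq ↦ ?_
  have hr : 0 < q.1 := hq.1
  have hpolar : !₂[q.1 * cos q.2, q.1 * sin q.2] = q.1 • !₂[cos q.2, sin q.2] := by
    ext i; fin_cases i <;> simp
  simp only [polarCoord_symm_apply, hpolar, norm_smul, norm_cos_sin, smul_smul, Real.norm_eq_abs,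
    abs_of_pos hr, mul_one, inv_mul_cancel₀ hr.ne', one_smul, smul_eq_mul]
  ring

lemma integral_Ioi_mul_indicator_Iio_one :
    ∫ r in Ioi (0 : ℝ), r * (Iio 1).indicator (fun _ ↦ (2 : ℝ)) r = 1 := by
  have h (r : ℝ) : r * (Iio 1).indicator (fun _ ↦ (2 : ℝ)) r = (Iio 1).indicator (· * 2) r :=
    (indicator_mul_right (Iio 1) id _).symm
  simp_rw [h]
  rw [setIntegral_indicator measurableSet_Iio, Ioi_inter_Iio, ← integral_Ioc_eq_integral_Ioo,
    ← intervalIntegral.integral_of_le zero_le_one, intervalIntegral.integral_mul_const,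
    integral_id]
  norm_num

theorem integral_toSphere_fin_two (F : EuclideanSpace ℝ (Fin 2) → ℝ) :
    ∫ v : sphere (0 : EuclideanSpace ℝ (Fin 2)) 1, F v ∂(volume : Measure _).toSphere =
      ∫ θ in (-π)..π, F !₂[cos θ, sin θ] := by
  -- any radial weight `g` with `∫ r g r dr = 1` over `(0, ∞)` would do
  have h := (integral_comp_smul_norm_inv_mul volume F ((Iio 1).indicator fun _ ↦ 2)).symm.trans
    (integral_comp_smul_norm_inv_mul_fin_two F _)
  simpa only [finrank_euclideanSpace_fin, Nat.add_one_sub_one, pow_one,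
    integral_Ioi_mul_indicator_Iio_one, mul_one, one_mul] using h

lemma exists_eq_norm_mul_cos_sin (q : EuclideanSpace ℝ (Fin 2)) :
    ∃ φ, q 0 = ‖q‖ * cos φ ∧ q 1 = ‖q‖ * sin φ := by
  let z : ℂ := ⟨q 0, q 1⟩
  have hz : ‖z‖ = ‖q‖ := by
    simp [z, Complex.norm_eq_sqrt_sq_add_sq, EuclideanSpace.norm_eq, Fin.sum_univ_two]
  exact ⟨z.arg, by rw [← hz, Complex.norm_mul_cos_arg], by rw [← hz, Complex.norm_mul_sin_arg]⟩

lemma toSphere_real_univ_fin_two :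
    (volume : Measure (EuclideanSpace ℝ (Fin 2))).toSphere.real univ = 2 * π := by
  simpa [two_mul] using integral_toSphere_fin_two fun _ ↦ 1

theorem average_toSphere_one_div_add_inner {s : ℝ} {q : EuclideanSpace ℝ (Fin 2)}
    (hq : ‖q‖ < s) :
    ⨍ v : sphere (0 : EuclideanSpace ℝ (Fin 2)) 1, 1 / (s + ⟪(v : EuclideanSpace ℝ (Fin 2)), q⟫)
        ∂(volume : Measure (EuclideanSpace ℝ (Fin 2))).toSphere = 1 / √(s ^ 2 - ‖q‖ ^ 2) := by
  obtain ⟨φ, hq0, hq1⟩ := exists_eq_norm_mul_cos_sin q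
  have hinner (θ : ℝ) : ⟪!₂[cos θ, sin θ], q⟫ = ‖q‖ * cos (θ - φ) := by
    simp [PiLp.inner_apply, Fin.sum_univ_two, hq0, hq1, cos_sub]
    ring
  have hshift := Function.Periodic.intervalIntegral_comp_sub_eq
    (f := fun θ ↦ (s + ‖q‖ * cos θ)⁻¹) (T := 2 * π) (fun θ ↦ by simp [cos_add_two_pi]) (-π) φ
  rw [show -π + 2 * π = π by ring] at hshift
  rw [average_eq, toSphere_real_univ_fin_two, integral_toSphere_fin_two fun v ↦ 1 / (s + ⟪v, q⟫)]
  simp_rw [hinner, one_div]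
  rw [hshift, integral_inv_add_mul_cos (by rwa [abs_norm]), smul_eq_mul]
  field_simp

theorem implicit_relation_dim2 (τ : ℝ) (hτ : 0 < τ)
    (H : EuclideanSpace ℝ (Fin 2) → ℝ)
    (hH : ∀ p, H p = 1 / τ - Real.sqrt (((1 + τ) / τ) ^ 2 + (2 / τ) * ‖p‖ ^ 2)) :
    ∀ p : EuclideanSpace ℝ (Fin 2), p ≠ 0 →
      τ / (1 + τ) =
        ⨍ v : sphere (0 : EuclideanSpace ℝ (Fin 2)) 1,
          1 / (-H p + 1 / τ + Real.sqrt (2 / τ) * ⟪(v : EuclideanSpace ℝ (Fin 2)), p⟫)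
          ∂((volume : Measure (EuclideanSpace ℝ (Fin 2))).toSphere) := by
  intro p _
  set q := √(2 / τ) • p
  have hq : ‖q‖ ^ 2 = 2 / τ * ‖p‖ ^ 2 := by
    rw [norm_smul, mul_pow, norm_of_nonneg (sqrt_nonneg _), sq_sqrt (by positivity)]
  have hs : ∀ x, -H p + 1 / τ + x = √(((1 + τ) / τ) ^ 2 + ‖q‖ ^ 2) + x := by
    intro x; rw [hH, hq]; ring
  have hlt : ‖q‖ < √(((1 + τ) / τ) ^ 2 + ‖q‖ ^ 2) := by
    rw [lt_sqrt (norm_nonneg _)]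
    linarith [pow_pos (div_pos (by linarith) hτ : 0 < (1 + τ) / τ) 2]
  simp_rw [hs, ← real_inner_smul_right]
  rw [average_toSphere_one_div_add_inner hlt, sq_sqrt (by positivity), add_sub_cancel_right,
    sqrt_sq (by positivity)]
  field_simp
end

section
/- Let τ > 0 and H(p) = (1−τ)/(2τ) − √(((1+τ)/(2τ))² + p²/τ) for p ∈ ℝ. Then −max_{p ≠ 0} H(p)/|p| equals 2/(1+τ) if τ ≤ 1 and equals 1/√τ if τ ≥ 1. -/
/-!
With `x = |p|⁻¹`, `H p / |p| = a x - √(b² x² + 1/τ)` where `a = (1 - τ)/(2τ)`, `b = (1 + τ)/(2τ)`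
and `b² - a² = 1/τ`. By Cauchy–Schwarz, `a x - √(b² x² + (b² - a²)) ≤ -(b² - a²)/b` for every `x`,
with equality at `x = a/b`; this gives the speed `2/(1 + τ)` when `a ≥ 0`, i.e. `τ ≤ 1`.
When `τ ≥ 1` we have `a ≤ 0`, so the function is at most its value `-1/√τ` at `x = 0`.
In both cases the bound is attained at a point of `[0, ∞)`, and continuity makes it the supremum
over `x > 0`.
-/

open Set

theorem sub_sqrt_div_abs {p : ℝ} (hp : p ≠ 0) (a b t : ℝ) :
    (a - √(b ^ 2 + p ^ 2 / t)) / |p| = a * |p|⁻¹ - √(b ^ 2 * |p|⁻¹ ^ 2 + 1 / t) := by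
  have hx : 0 < |p|⁻¹ := inv_pos.2 (abs_pos.2 hp)
  have hsq : b ^ 2 * |p|⁻¹ ^ 2 + 1 / t = (b ^ 2 + p ^ 2 / t) * |p|⁻¹ ^ 2 := by
    rw [inv_pow, sq_abs]; field_simp
  rw [hsq, Real.sqrt_mul' _ (sq_nonneg _), Real.sqrt_sq hx.le, div_eq_mul_inv, sub_mul]

theorem mul_sub_sqrt_le_neg_sqrt {a x : ℝ} (ha : a ≤ 0) (hx : 0 ≤ x) (b c : ℝ) :
    a * x - √(b ^ 2 * x ^ 2 + c) ≤ -√c := by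
  have : √c ≤ √(b ^ 2 * x ^ 2 + c) := Real.sqrt_le_sqrt (le_add_of_nonneg_left (by positivity))
  linarith [mul_nonpos_of_nonpos_of_nonneg ha hx]

theorem mul_sub_sqrt_le_neg_div {a b c : ℝ} (hb : 0 < b) (hc : 0 ≤ c) (habc : a ^ 2 + c = b ^ 2)
    (x : ℝ) : a * x - √(b ^ 2 * x ^ 2 + c) ≤ -c / b := by
  suffices a * x + c / b ≤ √(b ^ 2 * x ^ 2 + c) by rw [neg_div]; linarith
  refine (le_abs_self _).trans (Real.abs_le_sqrt ?_)
  rw [show a * x + c / b = (a * x * b + c) / b by field_simp, div_pow, div_le_iff₀ (by positivity)]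
  -- the defect of Cauchy–Schwarz for `(a, √c)` and `(x, √c / b)`
  have hdefect : (b ^ 2 * x ^ 2 + c) * b ^ 2 - (a * x * b + c) ^ 2 = c * (b * x - a) ^ 2 := by
    linear_combination (-(b ^ 2 * x ^ 2 + c)) * habc
  linarith [hdefect, mul_nonneg hc (sq_nonneg (b * x - a))]

theorem mul_div_sub_sqrt {a b c : ℝ} (hb : 0 < b) (habc : a ^ 2 + c = b ^ 2) :
    a * (a / b) - √(b ^ 2 * (a / b) ^ 2 + c) = -c / b := by
  have : b ^ 2 * (a / b) ^ 2 + c = b ^ 2 := by field_simp; linarith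
  rw [this, Real.sqrt_sq hb.le]
  field_simp
  linarith

theorem exists_pos_lt_of_lt_of_nonneg {g : ℝ → ℝ} (hg : Continuous g) {x₀ w : ℝ} (hx₀ : 0 ≤ x₀)
    (hw : w < g x₀) : ∃ x > 0, w < g x := by
  have hcl : x₀ ∈ closure (Ioi 0) := by rwa [closure_Ioi]
  obtain ⟨x, hwx, hx⟩ := mem_closure_iff.1 hcl _ (isOpen_lt continuous_const hg) hw
  exact ⟨x, hx, hwx⟩

theorem iSup_ne_zero_comp_inv_abs {g : ℝ → ℝ} (hg : Continuous g) {m x₀ : ℝ}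
    (hle : ∀ x > 0, g x ≤ m) (hx₀ : 0 ≤ x₀) (hm : g x₀ = m) :
    ⨆ p : {p : ℝ // p ≠ 0}, g |(p : ℝ)|⁻¹ = m := by
  have : Nonempty {p : ℝ // p ≠ 0} := ⟨⟨1, one_ne_zero⟩⟩
  refine ciSup_eq_of_forall_le_of_forall_lt_exists_gt
    (fun p ↦ hle _ (inv_pos.2 (abs_pos.2 p.2))) fun w hw ↦ ?_
  obtain ⟨x, hx, hwx⟩ := exists_pos_lt_of_lt_of_nonneg hg hx₀ (hm ▸ hw)
  exact ⟨⟨x⁻¹, inv_ne_zero hx.ne'⟩, by rwa [abs_inv, inv_inv, abs_of_pos hx]⟩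

theorem speed_dim1 (τ : ℝ) (hτ : 0 < τ)
    (H : ℝ → ℝ)
    (hH : ∀ p, H p = (1 - τ) / (2 * τ)
        - Real.sqrt (((1 + τ) / (2 * τ)) ^ 2 + p ^ 2 / τ)) :
    (τ ≤ 1 → -(⨆ p : {p : ℝ // p ≠ 0}, H p / |(p : ℝ)|) = 2 / (1 + τ)) ∧
    (1 ≤ τ → -(⨆ p : {p : ℝ // p ≠ 0}, H p / |(p : ℝ)|) = 1 / Real.sqrt τ) := by
  set a := (1 - τ) / (2 * τ)
  set b := (1 + τ) / (2 * τ)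
  have hb : 0 < b := by positivity
  have habc : a ^ 2 + 1 / τ = b ^ 2 := by simp only [a, b]; field_simp; ring
  set g : ℝ → ℝ := fun x ↦ a * x - √(b ^ 2 * x ^ 2 + 1 / τ)
  have hg : Continuous g := by fun_prop
  have hHg : (fun p : {p : ℝ // p ≠ 0} ↦ H p / |(p : ℝ)|) =
      fun p : {p : ℝ // p ≠ 0} ↦ g |(p : ℝ)|⁻¹ :=
    funext fun p ↦ by rw [hH]; exact sub_sqrt_div_abs p.2 a b τ
  rw [hHg]
  constructor
  · intro hτ1
    have ha : 0 ≤ a := div_nonneg (by linarith) (by positivity)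
    rw [iSup_ne_zero_comp_inv_abs hg (fun x _ ↦ mul_sub_sqrt_le_neg_div hb (by positivity) habc x)
      (div_nonneg ha hb.le) (mul_div_sub_sqrt hb habc)]
    simp only [b]
    field_simp
  · intro hτ1
    have ha : a ≤ 0 := div_nonpos_of_nonpos_of_nonneg (by linarith) (by positivity)
    rw [iSup_ne_zero_comp_inv_abs hg (fun x hx ↦ mul_sub_sqrt_le_neg_sqrt ha hx.le b _) le_rfl
      (by simp [g]), neg_neg, Real.sqrt_div' _ hτ.le, Real.sqrt_one]
end

section
/- Let τ > 0 and H(p) = 1/τ − √(((1+τ)/τ)² + (2/τ)|p|²) for p ∈ ℝ². Then −sup_{p ≠ 0} H(p)/|p| = √(2(2+τ))/(1+τ), and the supremum is attained at |p| = (1+τ)√(2+τ)/√2. -/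
/-!
With `q = √(2(2+τ))` and `c = q/(1+τ)`, clearing denominators gives
`((1+τ)/τ)² + (2/τ) r² - (1/τ + c r)² = (q - 2r/(1+τ))² / (2τ)`.
Hence `H(p) ≤ -c ‖p‖`, with equality when `‖p‖ = (1+τ) q / 2`, so `c` is minus the maximum
of `H(p)/|p|`.
-/

open Real

lemma radicand_sub_sq_eq {τ q : ℝ} (hτ : τ ≠ 0) (hτ₁ : 1 + τ ≠ 0) (hq : q ^ 2 = 2 * (2 + τ))
    (r : ℝ) :
    ((1 + τ) / τ) ^ 2 + (2 / τ) * r ^ 2 - (1 / τ + q / (1 + τ) * r) ^ 2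
      = (q - 2 * r / (1 + τ)) ^ 2 / (2 * τ) := by
  field_simp
  linear_combination (-(τ * (1 + τ) ^ 2) - 2 * τ ^ 2 * r ^ 2) * hq

lemma hamiltonian_le_neg_speed_mul {τ : ℝ} (hτ : 0 < τ) (r : ℝ) :
    1 / τ - √(((1 + τ) / τ) ^ 2 + (2 / τ) * r ^ 2) ≤ -(√(2 * (2 + τ)) / (1 + τ)) * r := by
  have hgap := radicand_sub_sq_eq hτ.ne' (by positivity) (sq_sqrt (by positivity)) r
  have hsq : (1 / τ + √(2 * (2 + τ)) / (1 + τ) * r) ^ 2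
      ≤ ((1 + τ) / τ) ^ 2 + (2 / τ) * r ^ 2 := by
    have : 0 ≤ (√(2 * (2 + τ)) - 2 * r / (1 + τ)) ^ 2 / (2 * τ) := by positivity
    linarith
  linarith [le_abs_self (1 / τ + √(2 * (2 + τ)) / (1 + τ) * r), abs_le_sqrt hsq]

lemma hamiltonian_eq_neg_speed_mul {τ : ℝ} (hτ : 0 < τ) :
    1 / τ - √(((1 + τ) / τ) ^ 2 + (2 / τ) * ((1 + τ) * √(2 * (2 + τ)) / 2) ^ 2)
      = -(√(2 * (2 + τ)) / (1 + τ)) * ((1 + τ) * √(2 * (2 + τ)) / 2) := by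
  have hτ₁ : 1 + τ ≠ 0 := by positivity
  have hgap := radicand_sub_sq_eq hτ.ne' hτ₁ (sq_sqrt (by positivity))
    ((1 + τ) * √(2 * (2 + τ)) / 2)
  have hzero : √(2 * (2 + τ)) - 2 * ((1 + τ) * √(2 * (2 + τ)) / 2) / (1 + τ) = 0 := by
    field_simp; ring
  rw [hzero, zero_pow two_ne_zero, zero_div, sub_eq_zero] at hgap
  rw [hgap, sqrt_sq (by positivity)]
  ring

lemma ciSup_div_norm_eq {E : Type*} [NormedAddCommGroup E] {g : ℝ → ℝ} {m : ℝ}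
    (hle : ∀ r, g r ≤ m * r) (p₀ : E) (hp₀ : p₀ ≠ 0) (heq : g ‖p₀‖ = m * ‖p₀‖) :
    ⨆ p : {p : E // p ≠ 0}, g ‖(p : E)‖ / ‖(p : E)‖ = m := by
  have hbound : ∀ p : {p : E // p ≠ 0}, g ‖(p : E)‖ / ‖(p : E)‖ ≤ m := fun p =>
    (div_le_iff₀ (norm_pos_iff.mpr p.2)).mpr (hle _)
  have : Nonempty {p : E // p ≠ 0} := ⟨⟨p₀, hp₀⟩⟩
  refine le_antisymm (ciSup_le hbound) ?_
  calc m = g ‖p₀‖ / ‖p₀‖ := by rw [heq, mul_div_cancel_right₀ _ (norm_ne_zero_iff.mpr hp₀)]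
    _ ≤ _ := le_ciSup ⟨m, Set.forall_mem_range.mpr hbound⟩ (⟨p₀, hp₀⟩ : {p : E // p ≠ 0})

theorem speed_dim2 (τ : ℝ) (hτ : 0 < τ)
    (H : EuclideanSpace ℝ (Fin 2) → ℝ)
    (hH : ∀ p, H p = 1 / τ - Real.sqrt (((1 + τ) / τ) ^ 2 + (2 / τ) * ‖p‖ ^ 2)) :
    -(⨆ p : {p : EuclideanSpace ℝ (Fin 2) // p ≠ 0}, H p / ‖(p : EuclideanSpace ℝ (Fin 2))‖)
        = Real.sqrt (2 * (2 + τ)) / (1 + τ) ∧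
    ∃ p : EuclideanSpace ℝ (Fin 2), p ≠ 0 ∧
      ‖p‖ = (1 + τ) * Real.sqrt (2 + τ) / Real.sqrt 2 ∧
      H p / ‖p‖ =
        ⨆ q : {q : EuclideanSpace ℝ (Fin 2) // q ≠ 0}, H q / ‖(q : EuclideanSpace ℝ (Fin 2))‖ := by
  have hr₀ : (1 + τ) * √(2 + τ) / √2 = (1 + τ) * √(2 * (2 + τ)) / 2 := by
    rw [sqrt_mul zero_le_two, div_eq_div_iff (by positivity) two_ne_zero]
    linear_combination -(1 + τ) * √(2 + τ) * sq_sqrt zero_le_two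
  obtain ⟨p₀, hp₀⟩ := exists_norm_eq (EuclideanSpace ℝ (Fin 2))
    (by positivity : 0 ≤ (1 + τ) * √(2 + τ) / √2)
  have hp₀ne : p₀ ≠ 0 := norm_pos_iff.mp (hp₀ ▸ by positivity)
  have heq := hamiltonian_eq_neg_speed_mul hτ
  rw [← hr₀, ← hp₀] at heq
  simp only [hH]
  have hsup := ciSup_div_norm_eq (hamiltonian_le_neg_speed_mul hτ) p₀ hp₀ne heq
  refine ⟨by rw [hsup, neg_neg], p₀, hp₀ne, hp₀, ?_⟩
  rw [hsup, div_eq_iff (norm_ne_zero_iff.mpr hp₀ne)]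
  exact heq
end

section
/- For every τ ≥ 1, the one-dimensional speed c_{1,τ} := −sup_{p ≠ 0} H(p)/|p|, with H(p) = (1−τ)/(2τ) − √(((1+τ)/(2τ))² + p²/τ), equals the transport speed a_{1,τ} = 1/√τ; and for 0 < τ < 1 one has c_{1,τ} = 2/(1+τ) < 1/√τ = a_{1,τ}. -/
theorem phase_transition_dim1 (τ : ℝ) (hτ : 0 < τ)
    (H : ℝ → ℝ)
    (hH : ∀ p, H p = (1 - τ) / (2 * τ)
        - Real.sqrt (((1 + τ) / (2 * τ)) ^ 2 + p ^ 2 / τ)) :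
    (1 ≤ τ → -(⨆ p : {p : ℝ // p ≠ 0}, H p / |(p : ℝ)|) = 1 / Real.sqrt τ) ∧
    (τ < 1 → -(⨆ p : {p : ℝ // p ≠ 0}, H p / |(p : ℝ)|) = 2 / (1 + τ) ∧
      2 / (1 + τ) < 1 / Real.sqrt τ) := by
  have : Nonempty {p : ℝ // p ≠ 0} := ⟨⟨1, one_ne_zero⟩⟩
  set s := Real.sqrt τ with hs_def
  have hs : 0 < s := Real.sqrt_pos.mpr hτ
  have hs2 : s ^ 2 = τ := Real.sq_sqrt hτ.le
  have hsqrt_abs : ∀ p : ℝ, Real.sqrt (p ^ 2 / τ) = |p| / s := by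
    intro p
    rw [Real.sqrt_div (sq_nonneg p), Real.sqrt_sq_eq_abs]
  constructor
  · intro h1
    have key : (⨆ p : {p : ℝ // p ≠ 0}, H p / |(p : ℝ)|) = -(1 / s) := by
      apply ciSup_eq_of_forall_le_of_forall_lt_exists_gt
      · rintro ⟨p, hp⟩
        have hap : 0 < |p| := abs_pos.mpr hp
        rw [hH p, div_le_iff₀ hap]
        have h1' : Real.sqrt (p ^ 2 / τ) ≤
            Real.sqrt (((1 + τ) / (2 * τ)) ^ 2 + p ^ 2 / τ) :=
          Real.sqrt_le_sqrt (le_add_of_nonneg_left (by positivity))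
        rw [hsqrt_abs] at h1'
        have h2' : (1 - τ) / (2 * τ) ≤ 0 := by
          apply div_nonpos_of_nonpos_of_nonneg <;> linarith
        have : -(1 / s) * |p| = -(|p| / s) := by ring
        rw [this]
        linarith
      · intro w hw
        obtain ⟨ε, hε_def⟩ : ∃ ε : ℝ, ε = -(1 / s) - w := ⟨_, rfl⟩
        have hε : 0 < ε := by rw [hε_def]; linarith
        obtain ⟨p, hp_def⟩ : ∃ p : ℝ, p = 2 / ε + 1 := ⟨_, rfl⟩
        refine ⟨⟨p, by rw [hp_def]; positivity⟩, ?_⟩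
        have hp0 : 0 < p := by rw [hp_def]; positivity
        have hinv : 1 / p < ε := by
          rw [div_lt_iff₀ hp0]
          have h2 : 2 / ε < p := by rw [hp_def]; linarith [div_pos (by norm_num : (0:ℝ)<2) hε]
          rw [div_lt_iff₀ hε] at h2
          linarith
        have hub : Real.sqrt (((1 + τ) / (2 * τ)) ^ 2 + p ^ 2 / τ) ≤
            (1 + τ) / (2 * τ) + p / s := by
          have hb : 0 ≤ (1 + τ) / (2 * τ) + p / s := by positivity
          have : ((1 + τ) / (2 * τ)) ^ 2 + p ^ 2 / τ ≤
              ((1 + τ) / (2 * τ) + p / s) ^ 2 := by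
            have : (p / s) ^ 2 = p ^ 2 / τ := by
              rw [div_pow, hs2]
            nlinarith [mul_pos (div_pos (by linarith : (0:ℝ) < 1 + τ)
              (by linarith : (0:ℝ) < 2 * τ)) (div_pos hp0 hs)]
          calc Real.sqrt (((1 + τ) / (2 * τ)) ^ 2 + p ^ 2 / τ)
              ≤ Real.sqrt (((1 + τ) / (2 * τ) + p / s) ^ 2) := Real.sqrt_le_sqrt this
            _ = |(1 + τ) / (2 * τ) + p / s| := Real.sqrt_sq_eq_abs _
            _ = (1 + τ) / (2 * τ) + p / s := abs_of_nonneg hb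
        show w < H p / |p|
        rw [hH p, abs_of_pos hp0, lt_div_iff₀ hp0]
        have hkey : (1 - τ) / (2 * τ) - ((1 + τ) / (2 * τ) + p / s) ≤
            (1 - τ) / (2 * τ) - Real.sqrt (((1 + τ) / (2 * τ)) ^ 2 + p ^ 2 / τ) := by
          linarith
        have hsimp : (1 - τ) / (2 * τ) - ((1 + τ) / (2 * τ) + p / s) = -1 - p / s := by
          field_simp
          ring
        rw [hsimp] at hkey
        have hwp : w * p < -1 - p / s := by
          have h1p : w = -(1 / s) - ε := by rw [hε_def]; ring
          rw [h1p]
          have : (-(1 / s) - ε) * p = -(p / s) - ε * p := by ring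
          rw [this]
          have : 1 < ε * p := by
            rw [div_lt_iff₀ hp0] at hinv
            linarith [hinv]
          linarith
        linarith
    rw [key]; ring
  · intro h2
    have h1τ : 0 < 1 - τ := by linarith
    have h1τ' : 0 < 1 + τ := by linarith
    constructor
    · have key : (⨆ p : {p : ℝ // p ≠ 0}, H p / |(p : ℝ)|) = -(2 / (1 + τ)) := by
        apply ciSup_eq_of_forall_le_of_forall_lt_exists_gt
        · rintro ⟨p, hp⟩
          obtain ⟨q, hq⟩ : ∃ q : ℝ, q = |p| := ⟨_, rfl⟩
          have hap : 0 < q := hq ▸ abs_pos.mpr hp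
          have hq2 : p ^ 2 = q ^ 2 := by rw [hq, sq_abs]
          show H p / |p| ≤ -(2 / (1 + τ))
          rw [hH p, ← hq, hq2, div_le_iff₀ hap]
          -- need: (1-τ)/(2τ) - √S ≤ -(2/(1+τ)) |p|
          -- i.e. √S ≥ 2|p|/(1+τ) + (1-τ)/(2τ)
          have hrhs : 0 ≤ 2 * q / (1 + τ) + (1 - τ) / (2 * τ) := by positivity
          have hsq : (2 * q / (1 + τ) + (1 - τ) / (2 * τ)) ^ 2 ≤
              ((1 + τ) / (2 * τ)) ^ 2 + q ^ 2 / τ := by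
            have hkey : ((1 + τ) / (2 * τ)) ^ 2 + q ^ 2 / τ -
                (2 * q / (1 + τ) + (1 - τ) / (2 * τ)) ^ 2 =
                ((1 - τ) * q - (1 + τ)) ^ 2 / (τ * (1 + τ) ^ 2) := by
              field_simp
              ring
            linarith [div_nonneg (sq_nonneg ((1 - τ) * q - (1 + τ)))
                (by positivity : (0:ℝ) ≤ τ * (1 + τ) ^ 2), hkey]
          have hge : 2 * q / (1 + τ) + (1 - τ) / (2 * τ) ≤
              Real.sqrt (((1 + τ) / (2 * τ)) ^ 2 + q ^ 2 / τ) := by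
            have := Real.sqrt_le_sqrt hsq
            rwa [Real.sqrt_sq hrhs] at this
          have : -(2 / (1 + τ)) * q = -(2 * q / (1 + τ)) := by ring
          rw [this]
          linarith
        · intro w hw
          refine ⟨⟨(1 + τ) / (1 - τ), by positivity⟩, ?_⟩
          set p : ℝ := (1 + τ) / (1 - τ) with hp_def
          have hp0 : 0 < p := by positivity
          have hS : ((1 + τ) / (2 * τ)) ^ 2 + p ^ 2 / τ =
              ((1 + τ) ^ 2 / (2 * τ * (1 - τ))) ^ 2 := by
            rw [hp_def]; field_simp; ring
          have hsqrtS : Real.sqrt (((1 + τ) / (2 * τ)) ^ 2 + p ^ 2 / τ) =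
              (1 + τ) ^ 2 / (2 * τ * (1 - τ)) := by
            rw [hS, Real.sqrt_sq (by positivity)]
          show w < H p / |p|
          rw [hH p, hsqrtS, abs_of_pos hp0, hp_def]
          have heq : ((1 - τ) / (2 * τ) - (1 + τ) ^ 2 / (2 * τ * (1 - τ))) /
              ((1 + τ) / (1 - τ)) = -(2 / (1 + τ)) := by
            field_simp
            ring
          rw [heq]
          exact hw
      rw [key]; ring
    · rw [div_lt_div_iff₀ h1τ' hs]
      have hs1 : s < 1 := by
        nlinarith [hs2, hs]
      nlinarith [sq_nonneg (1 - s), hs2]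
end

section
/- Let τ > 0 and define H : ℝ → ℝ by H(p) = (1−τ)/(2τ) − √(((1+τ)/(2τ))² + p²/τ). Then its concave Legendre dual L(q) = inf_{p ∈ ℝ}(q·p − H(p)) satisfies: L(q) = −(1−τ)/(2τ) + ((1+τ)/(2τ))·√(1 − τq²) if τq² ≤ 1, and L(q) = −∞ if τq² > 1. -/
/-!
Substituting `p = √τ u` and `r = q √τ` turns `q p - H p` into `r u + √(a² + u²) - c` with
`a = (1 + τ)/(2τ)` and `c = (1 - τ)/(2τ)`. For `r² ≤ 1` put `s = √(1 - r²)`; Lagrange's identity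
`(a² + u²)(r² + s²) = (a r + u s)² + (a s - r u)²` gives `r u + √(a² + u²) ≥ a s`, with equality at
`u = -a r / s` when `s > 0`, and approached along `u = -r x`, `x → ∞`, when `s = 0`.
For `r² > 1` the same ray makes the objective decrease with slope at least `r² - |r| > 0`.
-/

open Set

section SqrtConjugate

variable {r : ℝ}

theorem mul_sqrt_one_sub_sq_le_mul_add_sqrt (a : ℝ) (hr : r ^ 2 ≤ 1) (u : ℝ) :
    a * √(1 - r ^ 2) ≤ r * u + √(a ^ 2 + u ^ 2) := by
  set s := √(1 - r ^ 2)
  have hs : s ^ 2 = 1 - r ^ 2 := Real.sq_sqrt (by linarith)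
  have lagrange : a ^ 2 + u ^ 2 = (a * r + u * s) ^ 2 + (a * s - r * u) ^ 2 := by
    linear_combination (-(a ^ 2 + u ^ 2)) * hs
  have hsq : (a * s - r * u) ^ 2 ≤ a ^ 2 + u ^ 2 := by
    rw [lagrange]; nlinarith [sq_nonneg (a * r + u * s)]
  linarith [le_abs_self (a * s - r * u), Real.abs_le_sqrt hsq]

theorem mul_add_sqrt_eq_of_sq_lt_one {a : ℝ} (ha : 0 ≤ a) (hr : r ^ 2 < 1) :
    r * (-(a * r) / √(1 - r ^ 2)) + √(a ^ 2 + (-(a * r) / √(1 - r ^ 2)) ^ 2)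
      = a * √(1 - r ^ 2) := by
  set s := √(1 - r ^ 2)
  have hs : s ^ 2 = 1 - r ^ 2 := Real.sq_sqrt (by linarith)
  have hs0 : 0 < s := Real.sqrt_pos.2 (by linarith)
  have hnorm : a ^ 2 + (-(a * r) / s) ^ 2 = (a / s) ^ 2 := by
    field_simp
    linear_combination a ^ 2 * hs
  rw [hnorm, Real.sqrt_sq (by positivity)]
  field_simp
  linear_combination (-a) * hs

theorem sqrt_sq_add_sq_le_add_div (a : ℝ) {x : ℝ} (hx : 0 < x) :
    √(a ^ 2 + x ^ 2) ≤ x + a ^ 2 / (2 * x) := by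
  rw [Real.sqrt_le_left (by positivity)]
  have hexp : (x + a ^ 2 / (2 * x)) ^ 2 = a ^ 2 + x ^ 2 + (a ^ 2 / (2 * x)) ^ 2 := by
    field_simp; ring
  nlinarith [sq_nonneg (a ^ 2 / (2 * x))]

theorem isGLB_range_mul_add_sqrt {a : ℝ} (ha : 0 ≤ a) (hr : r ^ 2 ≤ 1) :
    IsGLB (range fun u => r * u + √(a ^ 2 + u ^ 2)) (a * √(1 - r ^ 2)) := by
  refine ⟨forall_mem_range.2 (mul_sqrt_one_sub_sq_le_mul_add_sqrt a hr), fun b hb => ?_⟩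
  rw [mem_lowerBounds, forall_mem_range] at hb
  rcases hr.lt_or_eq with hr | hr
  · exact (hb _).trans_eq (mul_add_sqrt_eq_of_sq_lt_one ha hr)
  · rw [hr, sub_self, Real.sqrt_zero, mul_zero]
    by_contra! hb0
    set x := a ^ 2 / (2 * b) + 1
    have hx : 0 < x := by positivity
    have hval := hb (-(r * x))
    rw [show r * -(r * x) = -x by linear_combination (-x) * hr,
      show (-(r * x)) ^ 2 = x ^ 2 by linear_combination x ^ 2 * hr] at hval
    have hsmall : a ^ 2 / (2 * x) < b := by
      have h2bx : b * (2 * x) = a ^ 2 + 2 * b := by simp only [x]; field_simp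
      rw [div_lt_iff₀ (by positivity), h2bx]
      linarith
    linarith [sqrt_sq_add_sq_le_add_div a hx]

theorem not_bddBelow_range_mul_add_sqrt (a : ℝ) (hr : 1 < r ^ 2) :
    ¬BddBelow (range fun u => r * u + √(a ^ 2 + u ^ 2)) := by
  rintro ⟨m, hm⟩
  rw [mem_lowerBounds, forall_mem_range] at hm
  have hk : 0 < r ^ 2 - |r| := by nlinarith [sq_abs r, abs_nonneg r]
  set x := max ((|a| - m) / (r ^ 2 - |r|)) 0 + 1
  have hx : 0 < x := by positivity
  have hkx : |a| - m < (r ^ 2 - |r|) * x := by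
    rw [← div_lt_iff₀' hk]
    linarith [le_max_left ((|a| - m) / (r ^ 2 - |r|)) 0]
  have hsqrt : √(a ^ 2 + (-(r * x)) ^ 2) ≤ |a| + |r| * x := by
    have hexp : (|a| + |r| * x) ^ 2 = a ^ 2 + (-(r * x)) ^ 2 + 2 * |a| * |r| * x := by
      rw [add_sq, mul_pow, sq_abs, sq_abs]; ring
    rw [Real.sqrt_le_left (by positivity), hexp]
    have : 0 ≤ 2 * |a| * |r| * x := by positivity
    linarith
  linarith [hm (-(r * x))]

end SqrtConjugate

theorem legendre_dual_dim1 (τ : ℝ) (hτ : 0 < τ)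
    (H : ℝ → ℝ)
    (hH : ∀ p, H p = (1 - τ) / (2 * τ)
        - Real.sqrt (((1 + τ) / (2 * τ)) ^ 2 + p ^ 2 / τ)) :
    ∀ q : ℝ,
      (τ * q ^ 2 ≤ 1 →
        (⨅ p : ℝ, (q * p - H p))
          = -(1 - τ) / (2 * τ) + ((1 + τ) / (2 * τ)) * Real.sqrt (1 - τ * q ^ 2)) ∧
      (1 < τ * q ^ 2 → ¬ BddBelow (Set.range fun p : ℝ => q * p - H p)) := by
  intro q
  set a := (1 + τ) / (2 * τ)
  set c := (1 - τ) / (2 * τ)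
  set r := q * √τ
  have hr : r ^ 2 = τ * q ^ 2 := by rw [mul_pow, Real.sq_sqrt hτ.le]; ring
  have hrange : range (fun p => q * p - H p)
      = OrderIso.subRight c '' range fun u => r * u + √(a ^ 2 + u ^ 2) := by
    have hsurj : Function.Surjective fun p : ℝ => p / √τ :=
      fun u => ⟨u * √τ, by field_simp⟩
    rw [← range_comp,
      ← hsurj.range_comp (OrderIso.subRight c ∘ fun u => r * u + √(a ^ 2 + u ^ 2))]
    congr 1
    funext p
    have hscale : r * (p / √τ) = q * p := by simp only [r]; field_simp
    simp only [Function.comp, OrderIso.subRight_apply, hH, hscale, div_pow,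
      Real.sq_sqrt hτ.le]
    ring
  refine ⟨fun hq => ?_, fun hq => ?_⟩
  · have hglb := (OrderIso.subRight c).isGLB_image'.2
      (isGLB_range_mul_add_sqrt (a := a) (by positivity) (hr ▸ hq))
    rw [← hrange, hr] at hglb
    rw [hglb.ciInf_eq, OrderIso.subRight_apply]
    ring
  · rw [hrange, OrderIso.bddBelow_image]
    exact not_bddBelow_range_mul_add_sqrt a (hr ▸ hq)
end

section
/- Let H : ℝⁿ → ℝ be concave with H(p)/|p| → −a as |p| → ∞ for some a > 0, and suppose the supremum c := −sup_{p ≠ 0} H(p)/|p| is attained at some p_c ≠ 0. Let L(q) := inf_p (q·p − H(p)) be the concave dual. Then for every unit vector e, L(c e) = 0. -/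
/-!
Concavity and evenness make `0` a maximiser of `H`, so `H ≤ H 0 < 0` and the supremum defining
`c` is finite; hence `H p ≤ -c ‖p‖` everywhere. By Cauchy–Schwarz every `⟪c • e, p⟫ - H p` is then
nonnegative, and it vanishes at `p = -‖p_c‖ • e`, where rotation invariance gives `H p = H p_c`.
-/

open Filter RealInnerProductSpace

section

variable {E : Type*}

theorem ConcaveOn.apply_le_apply_zero_of_even [AddCommGroup E] [Module ℝ E] {H : E → ℝ}
    (hconc : ConcaveOn ℝ Set.univ H) (heven : ∀ p, H (-p) = H p) (p : E) : H p ≤ H 0 := by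
  have hmid := hconc.2 (Set.mem_univ p) (Set.mem_univ (-p))
    (by norm_num : (0 : ℝ) ≤ 1 / 2) (by norm_num : (0 : ℝ) ≤ 1 / 2) (by norm_num)
  rw [heven, smul_neg, add_neg_cancel, smul_eq_mul] at hmid
  linarith

theorem apply_le_iSup_div_norm_mul_norm [NormedAddCommGroup E] {H : E → ℝ}
    (hH : ∀ p, H p ≤ 0) (p : E) :
    H p ≤ (⨆ q : {q : E // q ≠ 0}, H q / ‖(q : E)‖) * ‖p‖ := by
  rcases eq_or_ne p 0 with rfl | hp
  · simpa using hH 0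
  have hbdd : BddAbove (Set.range fun q : {q : E // q ≠ 0} => H q / ‖(q : E)‖) :=
    ⟨0, by rintro _ ⟨q, rfl⟩; exact div_nonpos_of_nonpos_of_nonneg (hH q) (norm_nonneg _)⟩
  rw [← div_le_iff₀ (norm_pos_iff.mpr hp)]
  exact le_ciSup (f := fun q : {q : E // q ≠ 0} => H q / ‖(q : E)‖) hbdd ⟨p, hp⟩

theorem iInf_inner_smul_sub_eq_zero [NormedAddCommGroup E] [InnerProductSpace ℝ E]
    {H : E → ℝ} {c : ℝ} (hc : 0 ≤ c) (hle : ∀ p, H p ≤ -c * ‖p‖) {e : E} (he : ‖e‖ = 1)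
    {r : ℝ} (htouch : H (-r • e) = -c * r) :
    ⨅ p : E, (⟪c • e, p⟫ - H p) = 0 := by
  have hnonneg : ∀ p, 0 ≤ ⟪c • e, p⟫ - H p := fun p => by
    have hcs : -‖p‖ ≤ ⟪e, p⟫ := by
      simpa [he] using neg_le_of_abs_le (abs_real_inner_le_norm e p)
    rw [real_inner_smul_left]
    nlinarith [hle p]
  have hzero : ⟪c • e, -r • e⟫ - H (-r • e) = 0 := by
    rw [htouch, real_inner_smul_left, real_inner_smul_right, real_inner_self_eq_norm_sq, he]
    ring
  exact le_antisymm (hzero ▸ ciInf_le ⟨0, by rintro _ ⟨p, rfl⟩; exact hnonneg p⟩ _)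
    (le_ciInf hnonneg)

end

theorem dual_vanishes_at_speed_general (n : ℕ)
    (H : EuclideanSpace ℝ (Fin n) → ℝ)
    (hconc : ConcaveOn ℝ Set.univ H)
    (hrot : ∀ p q : EuclideanSpace ℝ (Fin n), ‖p‖ = ‖q‖ → H p = H q)
    (h0 : H 0 < 0)
    (c : ℝ)
    (hc : c = -(⨆ p : {p : EuclideanSpace ℝ (Fin n) // p ≠ 0},
        H p / ‖(p : EuclideanSpace ℝ (Fin n))‖))
    (hattained : ∃ pc : EuclideanSpace ℝ (Fin n), pc ≠ 0 ∧ H pc / ‖pc‖ = -c) :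
    ∀ e : EuclideanSpace ℝ (Fin n), ‖e‖ = 1 →
      (⨅ p : EuclideanSpace ℝ (Fin n), (⟪c • e, p⟫ - H p)) = 0 := by
  intro e he
  obtain ⟨pc, hpc0, hpc⟩ := hattained
  have hnonpos : ∀ p, H p ≤ 0 := fun p =>
    ((hconc.apply_le_apply_zero_of_even fun p => hrot _ _ (norm_neg p)) p).trans h0.le
  have hcone : ∀ p, H p ≤ -c * ‖p‖ := fun p => by
    simpa [hc] using apply_le_iSup_div_norm_mul_norm hnonpos p
  have hc_nonneg : 0 ≤ c :=
    neg_nonpos.mp (hpc ▸ div_nonpos_of_nonpos_of_nonneg (hnonpos pc) (norm_nonneg pc))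
  have hpc_eq : H pc = -c * ‖pc‖ := (div_eq_iff (norm_ne_zero_iff.mpr hpc0)).mp hpc
  refine iInf_inner_smul_sub_eq_zero hc_nonneg hcone he (r := ‖pc‖) ?_
  rw [← hpc_eq]
  exact hrot _ _ (by rw [norm_smul, he, norm_neg, norm_norm, mul_one])

theorem dual_vanishes_at_speed (n : ℕ) (hn : 1 ≤ n)
    (H : EuclideanSpace ℝ (Fin n) → ℝ) (a : ℝ) (ha : 0 < a)
    (hconc : ConcaveOn ℝ Set.univ H)
    (hrot : ∀ p q : EuclideanSpace ℝ (Fin n), ‖p‖ = ‖q‖ → H p = H q)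
    (h0 : H 0 < 0)
    (hlim : Tendsto (fun p : EuclideanSpace ℝ (Fin n) => H p / ‖p‖)
      (Filter.comap norm Filter.atTop) (nhds (-a)))
    (c : ℝ)
    (hc : c = -(⨆ p : {p : EuclideanSpace ℝ (Fin n) // p ≠ 0},
        H p / ‖(p : EuclideanSpace ℝ (Fin n))‖))
    (hattained : ∃ pc : EuclideanSpace ℝ (Fin n), pc ≠ 0 ∧ H pc / ‖pc‖ = -c) :
    ∀ e : EuclideanSpace ℝ (Fin n), ‖e‖ = 1 →
      (⨅ p : EuclideanSpace ℝ (Fin n), (⟪c • e, p⟫ - H p)) = 0 :=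
  dual_vanishes_at_speed_general n H hconc hrot h0 c hc hattained
end

section
/- Let τ > 1 and set M = (1+τ)²/(4τ). Then M > 1, and for every ρ̂ ≥ 0 the quantity (1/τ)ρ̂ + (ρ̂ − M)·(ρ̂ − (M − 1))₊ is nonnegative, where x₊ = max(x,0). -/
/-! `M` is the smallest constant for which the quadratic `ρ / τ + (ρ - M) * (ρ - (M - 1))` is
nonnegative on all of `ℝ`: with `M = (1 + τ)² / (4τ)` its discriminant vanishes, so it is the perfect square
`(ρ - (τ² - 1) / (4τ))²`. Below `M - 1` the positive part is zero and only `ρ / τ ≥ 0` remains. -/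

lemma one_add_sq_div_four_mul_sub_one {τ : ℝ} (hτ : τ ≠ 0) :
    (1 + τ) ^ 2 / (4 * τ) - 1 = (τ - 1) ^ 2 / (4 * τ) := by
  field_simp
  ring

lemma one_lt_one_add_sq_div_four_mul {τ : ℝ} (hτ : 0 < τ) (hτ1 : τ ≠ 1) :
    1 < (1 + τ) ^ 2 / (4 * τ) := by
  have hpos : 0 < (τ - 1) ^ 2 / (4 * τ) := by
    have : τ - 1 ≠ 0 := sub_ne_zero.mpr hτ1
    positivity
  linarith [one_add_sq_div_four_mul_sub_one hτ.ne']

lemma inv_mul_add_sub_mul_sub_eq_sq {τ M : ℝ} (hτ : τ ≠ 0) (hM : M = (1 + τ) ^ 2 / (4 * τ))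
    (ρ : ℝ) : (1 / τ) * ρ + (ρ - M) * (ρ - (M - 1)) = (ρ - (τ ^ 2 - 1) / (4 * τ)) ^ 2 := by
  subst hM
  field_simp
  ring

theorem a_priori_bound_algebra (τ : ℝ) (hτ : 1 < τ) :
    let M : ℝ := (1 + τ) ^ 2 / (4 * τ)
    1 < M ∧ ∀ ρ : ℝ, 0 ≤ ρ →
      0 ≤ (1 / τ) * ρ + (ρ - M) * max (ρ - (M - 1)) 0 := by
  intro M
  have hτ0 : 0 < τ := zero_lt_one.trans hτ
  refine ⟨one_lt_one_add_sq_div_four_mul hτ0 hτ.ne', fun ρ hρ => ?_⟩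
  rcases le_total (ρ - (M - 1)) 0 with hle | hge
  · rw [max_eq_right hle, mul_zero, add_zero]
    positivity
  · rw [max_eq_left hge, inv_mul_add_sub_mul_sub_eq_sq hτ0.ne' rfl ρ]
    positivity
end

section
/- Let τ > 0, n ≥ 1, and a = √(n/τ). Define H(p) for p ∈ ℝⁿ implicitly by τ/(1+τ) = ⨍_{S^{n−1}} dv/(−H(p) + 1/τ + a v·p), when the right-hand side, evaluated as a strictly decreasing function of −H(p), attains the value τ/(1+τ) with −H(p) + 1/τ > a|p|. Then on the open set where H is so defined, H is concave: for any unit vector ξ, ξᵀ D²H(p) ξ ≤ 0. -/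
/-!
Fix `p ∈ U` and a direction `ξ`, and put `g t = H (p + t • ξ)`. By the defining relation,
`∫ (-g t + m v + t * k v)⁻¹ dv` is constant in `t` near `0`, where `m v = 1/τ + a ⟪v, p⟫` and
`k v = a ⟪v, ξ⟫`. The denominators stay above some `δ > 0` near `t = 0` (because
`a ⟪v, x⟫ ≥ -a ‖x‖` on the unit sphere), so the relation may be differentiated twice under the
integral. The first derivative vanishes identically, and the second, at `t = 0`, reads
`g'' 0 * ∫ c⁻² = -2 ∫ (g' 0 - k)² c⁻³ ≤ 0`, where `c` is the denominator at `t = 0`.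
-/

open MeasureTheory Metric Filter Topology RealInnerProductSpace

theorem abs_div_pow_le {x X c δ : ℝ} (hx : |x| ≤ X) (hδ : 0 < δ) (hc : δ ≤ c) (j : ℕ) :
    |x / c ^ j| ≤ X / δ ^ j := by
  rw [abs_div, abs_pow, abs_of_pos (hδ.trans_le hc)]
  exact div_le_div₀ ((abs_nonneg x).trans hx) hx (pow_pos hδ j) (pow_le_pow_left₀ hδ.le hc j)

section ParametricIntegral

variable {α : Type*} [MeasurableSpace α] {ν : Measure α}

theorem nonpos_of_integral_mul_add_eq_zero [NeZero ν] {y : ℝ} {u w : α → ℝ}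
    (hu : Integrable u ν) (hu_pos : ∀ a, 0 < u a) (hw : Integrable w ν) (hw_nonneg : 0 ≤ w)
    (h : ∫ a, (y * u a + w a) ∂ν = 0) : y ≤ 0 := by
  rw [integral_add (hu.const_mul y) hw, integral_const_mul] at h
  have hu_int_pos : 0 < ∫ a, u a ∂ν := by
    rw [integral_pos_iff_support_of_nonneg (fun a => (hu_pos a).le) hu,
      Function.support_eq_univ fun a => (hu_pos a).ne']
    exact Measure.measure_univ_pos.mpr (NeZero.ne ν)
  nlinarith [integral_nonneg (μ := ν) hw_nonneg]

variable [IsFiniteMeasure ν]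

theorem hasDerivAt_integral_of_eventually_abs_deriv_le {F F' : ℝ → α → ℝ} {x₀ B : ℝ}
    (hF_meas : ∀ᶠ x in 𝓝 x₀, AEStronglyMeasurable (F x) ν) (hF_int : Integrable (F x₀) ν)
    (hF'_meas : AEStronglyMeasurable (F' x₀) ν)
    (hF' : ∀ᶠ x in 𝓝 x₀, ∀ a, HasDerivAt (F · a) (F' x a) x ∧ |F' x a| ≤ B) :
    HasDerivAt (fun x => ∫ a, F x a ∂ν) (∫ a, F' x₀ a ∂ν) x₀ :=
  (hasDerivAt_integral_of_dominated_loc_of_deriv_le hF' hF_meas hF_int hF'_meas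
    (ae_of_all _ fun a _ hx => (hx a).2) (integrable_const B)
    (ae_of_all _ fun a _ hx => (hx a).1)).2

theorem eventually_integral_deriv_eq_zero {F F' : ℝ → α → ℝ} {x₀ B C : ℝ}
    (hF_meas : ∀ᶠ x in 𝓝 x₀, AEStronglyMeasurable (F x) ν)
    (hF_int : ∀ᶠ x in 𝓝 x₀, Integrable (F x) ν)
    (hF'_meas : ∀ᶠ x in 𝓝 x₀, AEStronglyMeasurable (F' x) ν)
    (hF' : ∀ᶠ x in 𝓝 x₀, ∀ a, HasDerivAt (F · a) (F' x a) x ∧ |F' x a| ≤ B)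
    (hconst : ∀ᶠ x in 𝓝 x₀, ∫ a, F x a ∂ν = C) :
    ∀ᶠ x in 𝓝 x₀, ∫ a, F' x a ∂ν = 0 := by
  filter_upwards [hF_meas.eventually_nhds, hF_int, hF'_meas, hF'.eventually_nhds,
    hconst.eventually_nhds] with x hxF_meas hxF_int hxF'_meas hxF' hxconst
  exact (hasDerivAt_integral_of_eventually_abs_deriv_le hxF_meas hxF_int hxF'_meas hxF').unique
    ((hasDerivAt_const x C).congr_of_eventuallyEq hxconst)

theorem integrable_div_pow {x c : α → ℝ} {X δ : ℝ} (hx_meas : AEStronglyMeasurable x ν)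
    (hc_meas : AEStronglyMeasurable c ν) (hx : ∀ a, |x a| ≤ X) (hδ : 0 < δ) (hc : ∀ a, δ ≤ c a)
    (j : ℕ) : Integrable (fun a => x a / c a ^ j) ν :=
  .of_bound (hx_meas.aemeasurable.div (hc_meas.aemeasurable.pow_const j)).aestronglyMeasurable
    (X / δ ^ j) (ae_of_all _ fun a => abs_div_pow_le (hx a) hδ (hc a) j)

end ParametricIntegral

section Denominator

variable {g g' : ℝ → ℝ} {t y z : ℝ}

theorem hasDerivAt_denom (hg : HasDerivAt g (g' t) t) :
    HasDerivAt (fun s => -g s + y + s * z) (z - g' t) t :=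
  ((hg.neg.add_const y).add ((hasDerivAt_id t).mul_const z)).congr_deriv (by ring)

theorem hasDerivAt_inv_denom (hg : HasDerivAt g (g' t) t) (hc : -g t + y + t * z ≠ 0) :
    HasDerivAt (fun s => (-g s + y + s * z)⁻¹) ((g' t - z) / (-g t + y + t * z) ^ 2) t :=
  ((hasDerivAt_denom hg).fun_inv hc).congr_deriv (by ring)

theorem hasDerivAt_div_sq_denom {g'' : ℝ} (hg : HasDerivAt g (g' t) t) (hg' : HasDerivAt g' g'' t)
    (hc : -g t + y + t * z ≠ 0) :
    HasDerivAt (fun s => (g' s - z) / (-g s + y + s * z) ^ 2)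
      (g'' / (-g t + y + t * z) ^ 2 + 2 * (g' t - z) ^ 2 / (-g t + y + t * z) ^ 3) t := by
  refine ((hg'.sub_const z).fun_div ((hasDerivAt_denom hg).fun_pow 2)
    (pow_ne_zero 2 hc)).congr_deriv ?_
  field_simp
  ring

end Denominator

theorem ContinuousAt.exists_eventually_abs_le {X : Type*} [TopologicalSpace X] {f : X → ℝ}
    {x : X} (hf : ContinuousAt f x) : ∃ M, ∀ᶠ y in 𝓝 x, |f y| ≤ M :=
  ⟨|f x| + 1, (hf.abs.eventually_lt continuousAt_const (lt_add_one _)).mono fun _ h => h.le⟩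

theorem second_deriv_nonpos_of_integral_inv_eq_const {α : Type*} [MeasurableSpace α]
    {ν : Measure α} [IsFiniteMeasure ν] [NeZero ν] {m k : α → ℝ}
    (hm : AEStronglyMeasurable m ν) (hk : AEStronglyMeasurable k ν) {K : ℝ}
    (hK : ∀ a, |k a| ≤ K) {g g' g'' : ℝ → ℝ} (hg : ∀ᶠ t in 𝓝 0, HasDerivAt g (g' t) t)
    (hg' : ∀ᶠ t in 𝓝 0, HasDerivAt g' (g'' t) t) (hg''_cont : ContinuousAt g'' 0) {δ : ℝ}
    (hδ : 0 < δ) (hδ_le : ∀ᶠ t in 𝓝 0, ∀ a, δ ≤ -g t + m a + t * k a) {C : ℝ}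
    (hC : ∀ᶠ t in 𝓝 0, ∫ a, (-g t + m a + t * k a)⁻¹ ∂ν = C) :
    g'' 0 ≤ 0 := by
  set c : ℝ → α → ℝ := fun t a => -g t + m a + t * k a
  have hm' := hm.aemeasurable
  have hk' := hk.aemeasurable
  have hc_meas (t : ℝ) : AEStronglyMeasurable (c t) ν :=
    (by fun_prop : AEMeasurable _ ν).aestronglyMeasurable
  have hc_ne : ∀ᶠ t in 𝓝 0, ∀ a, c t a ≠ 0 := hδ_le.mono fun t ht a => (hδ.trans_le (ht a)).ne'
  obtain ⟨M₁, hM₁⟩ := hg'.self_of_nhds.continuousAt.exists_eventually_abs_le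
  obtain ⟨M₂, hM₂⟩ := hg''_cont.exists_eventually_abs_le
  have hdiff_le : ∀ᶠ t in 𝓝 0, ∀ a, |g' t - k a| ≤ M₁ + K :=
    hM₁.mono fun t ht a => (abs_sub _ _).trans (add_le_add ht (hK a))
  have hsq_le : ∀ᶠ t in 𝓝 0, ∀ a, |2 * (g' t - k a) ^ 2| ≤ 2 * (M₁ + K) ^ 2 :=
    hdiff_le.mono fun t ht a => by
      rw [abs_mul, abs_two, abs_pow]
      exact mul_le_mul_of_nonneg_left (pow_le_pow_left₀ (abs_nonneg _) (ht a) 2) zero_le_two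
  have hF₁ : ∀ᶠ t in 𝓝 0, ∫ a, (g' t - k a) / c t a ^ 2 ∂ν = 0 := by
    refine eventually_integral_deriv_eq_zero (F := fun t a => (c t a)⁻¹) (B := (M₁ + K) / δ ^ 2)
      (.of_forall fun t => (by fun_prop : AEMeasurable _ ν).aestronglyMeasurable) ?_
      (.of_forall fun t => (by fun_prop : AEMeasurable _ ν).aestronglyMeasurable) ?_ hC
    · filter_upwards [hδ_le] with t ht
      simpa using integrable_div_pow (x := fun _ => (1 : ℝ)) aestronglyMeasurable_const
        (hc_meas t) (fun _ => abs_one.le) hδ ht 1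
    · filter_upwards [hg, hc_ne, hdiff_le, hδ_le] with t hgt hct hdt hδt a
      exact ⟨hasDerivAt_inv_denom hgt (hct a), abs_div_pow_le (hdt a) hδ (hδt a) 2⟩
  have hF₂ : ∀ᶠ t in 𝓝 0,
      ∫ a, (g'' t / c t a ^ 2 + 2 * (g' t - k a) ^ 2 / c t a ^ 3) ∂ν = 0 := by
    refine eventually_integral_deriv_eq_zero (B := M₂ / δ ^ 2 + 2 * (M₁ + K) ^ 2 / δ ^ 3)
      (.of_forall fun t => (by fun_prop : AEMeasurable _ ν).aestronglyMeasurable) ?_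
      (.of_forall fun t => (by fun_prop : AEMeasurable _ ν).aestronglyMeasurable) ?_ hF₁
    · filter_upwards [hdiff_le, hδ_le] with t hdt hδt
      exact integrable_div_pow (by fun_prop) (hc_meas t) hdt hδ hδt 2
    · filter_upwards [hg, hg', hc_ne, hM₂, hsq_le, hδ_le] with t hgt hg't hct hM₂t hsqt hδt a
      refine ⟨hasDerivAt_div_sq_denom hgt hg't (hct a), (abs_add_le _ _).trans ?_⟩
      exact add_le_add (abs_div_pow_le hM₂t hδ (hδt a) 2) (abs_div_pow_le (hsqt a) hδ (hδt a) 3)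
  have hδ₀ := hδ_le.self_of_nhds
  refine nonpos_of_integral_mul_add_eq_zero (u := fun a => 1 / c 0 a ^ 2)
    (integrable_div_pow aestronglyMeasurable_const (hc_meas 0) (fun _ => abs_one.le) hδ hδ₀ 2)
    (fun a => by have := hδ.trans_le (hδ₀ a); positivity)
    (integrable_div_pow (by fun_prop) (hc_meas 0) hsq_le.self_of_nhds hδ hδ₀ 3)
    (fun a => by have := hδ.trans_le (hδ₀ a); positivity) ?_
  simpa only [mul_one_div] using hF₂.self_of_nhds

section Line

variable {E F : Type*} [NormedAddCommGroup E] [NormedSpace ℝ E] [NormedAddCommGroup F]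
  [NormedSpace ℝ F] {x v : E}

theorem hasDerivAt_comp_add_smul {f : E → F} {t : ℝ} (hf : DifferentiableAt ℝ f (x + t • v)) :
    HasDerivAt (fun s : ℝ => f (x + s • v)) (fderiv ℝ f (x + t • v) v) t := by
  have hline : HasDerivAt (fun s : ℝ => x + s • v) v t := by
    simpa using ((hasDerivAt_id t).smul_const v).const_add x
  exact hf.hasFDerivAt.comp_hasDerivAt t hline

theorem tendsto_add_smul_nhds_zero : Tendsto (fun t : ℝ => x + t • v) (𝓝 0) (𝓝 x) :=
  (by fun_prop : Continuous fun t : ℝ => x + t • v).tendsto' 0 x (by simp)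

variable {f : E → ℝ}

theorem ContDiffAt.eventually_hasDerivAt_comp_add_smul (hf : ContDiffAt ℝ 2 f x) :
    ∀ᶠ t in 𝓝 (0 : ℝ), HasDerivAt (fun s => f (x + s • v)) (fderiv ℝ f (x + t • v) v) t :=
  (tendsto_add_smul_nhds_zero.eventually (hf.eventually (by simp))).mono fun _ ht =>
    hasDerivAt_comp_add_smul (ht.differentiableAt (by norm_num))

theorem ContDiffAt.eventually_hasDerivAt_fderiv_comp_add_smul (hf : ContDiffAt ℝ 2 f x) :
    ∀ᶠ t in 𝓝 (0 : ℝ), HasDerivAt (fun s => fderiv ℝ f (x + s • v) v)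
      (fderiv ℝ (fderiv ℝ f) (x + t • v) v v) t :=
  (tendsto_add_smul_nhds_zero.eventually (hf.eventually (by simp))).mono fun t ht =>
    (hasDerivAt_comp_add_smul ((ht.fderiv_right (m := 1) le_rfl).differentiableAt
      one_ne_zero)).clm_apply (hasDerivAt_const t v) |>.congr_deriv (by simp)

theorem ContDiffAt.continuousAt_fderiv_fderiv_comp_add_smul (hf : ContDiffAt ℝ 2 f x) :
    ContinuousAt (fun t : ℝ => fderiv ℝ (fderiv ℝ f) (x + t • v) v v) 0 := by
  have h := (hf.fderiv_right (m := 1) le_rfl).continuousAt_fderiv one_ne_zero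
  exact ((h.comp_of_eq (by fun_prop) (by simp)).clm_apply continuousAt_const).clm_apply
    continuousAt_const

end Line

section Sphere

variable {E : Type*} [NormedAddCommGroup E] [InnerProductSpace ℝ E]

theorem abs_real_inner_le_norm_of_mem_sphere {v : E} (hv : v ∈ sphere (0 : E) 1) (x : E) :
    |⟪v, x⟫| ≤ ‖x‖ := by
  simpa [mem_sphere_zero_iff_norm.mp hv] using abs_real_inner_le_norm v x

theorem exists_pos_eventually_le_add_mul_inner {φ : E → ℝ} {p : E} {a : ℝ} (ha : 0 ≤ a)
    (hφ : ContinuousAt φ p) (hp : a * ‖p‖ < φ p) :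
    ∃ δ > 0, ∀ᶠ x in 𝓝 p, ∀ v ∈ sphere (0 : E) 1, δ ≤ φ x + a * ⟪v, x⟫ := by
  refine ⟨(φ p - a * ‖p‖) / 2, by linarith, ?_⟩
  have hgap : ∀ᶠ x in 𝓝 p, (φ p - a * ‖p‖) / 2 < φ x - a * ‖x‖ :=
    continuousAt_const.eventually_lt (hφ.sub (continuousAt_const.mul continuous_norm.continuousAt))
      (by linarith)
  filter_upwards [hgap] with x hx v hv
  have hinner := neg_le_of_abs_le (abs_real_inner_le_norm_of_mem_sphere hv x)
  nlinarith [mul_le_mul_of_nonneg_left hinner ha]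

end Sphere

theorem implicit_hamiltonian_concave_general (n : ℕ) (hn : 1 ≤ n) (τ : ℝ)
    (a : ℝ) (ha : a = Real.sqrt (n / τ))
    (U : Set (EuclideanSpace ℝ (Fin n))) (hU : IsOpen U)
    (H : EuclideanSpace ℝ (Fin n) → ℝ)
    (hreg : ContDiffOn ℝ 2 H U)
    (hdef : ∀ p ∈ U, a * ‖p‖ < -H p + 1 / τ ∧
      τ / (1 + τ) =
        ⨍ v : sphere (0 : EuclideanSpace ℝ (Fin n)) 1,
          1 / (-H p + 1 / τ + a * ⟪(v : EuclideanSpace ℝ (Fin n)), p⟫)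
          ∂((volume : Measure (EuclideanSpace ℝ (Fin n))).toSphere)) :
    ∀ p ∈ U, ∀ ξ : EuclideanSpace ℝ (Fin n), ‖ξ‖ = 1 →
      iteratedFDerivWithin ℝ 2 H U p ![ξ, ξ] ≤ 0 := by
  intro p hp ξ _
  have ha₀ : 0 ≤ a := ha ▸ Real.sqrt_nonneg _
  have hHp : ContDiffAt ℝ 2 H p := hreg.contDiffAt (hU.mem_nhds hp)
  have : Nonempty (Fin n) := ⟨⟨0, hn⟩⟩
  set ν := (volume : Measure (EuclideanSpace ℝ (Fin n))).toSphere
  have : NeZero ν := ⟨Measure.toSphere_ne_zero _⟩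
  obtain ⟨δ, hδ, hδ_le⟩ := exists_pos_eventually_le_add_mul_inner (φ := fun x => -H x + 1 / τ)
    ha₀ (hHp.continuousAt.neg.add continuousAt_const) (hdef p hp).1
  have hden (t : ℝ) (v : sphere (0 : EuclideanSpace ℝ (Fin n)) 1) :
      -H (p + t • ξ) + (1 / τ + a * ⟪(v : EuclideanSpace ℝ (Fin n)), p⟫)
        + t * (a * ⟪(v : EuclideanSpace ℝ (Fin n)), ξ⟫)
      = -H (p + t • ξ) + 1 / τ + a * ⟪(v : EuclideanSpace ℝ (Fin n)), p + t • ξ⟫ := by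
    rw [inner_add_right, real_inner_smul_right]
    ring
  have hk (v : sphere (0 : EuclideanSpace ℝ (Fin n)) 1) :
      |a * ⟪(v : EuclideanSpace ℝ (Fin n)), ξ⟫| ≤ a * ‖ξ‖ := by
    rw [abs_mul, abs_of_nonneg ha₀]
    exact mul_le_mul_of_nonneg_left (abs_real_inner_le_norm_of_mem_sphere v.2 ξ) ha₀
  have key := second_deriv_nonpos_of_integral_inv_eq_const (ν := ν)
    (m := fun v => 1 / τ + a * ⟪(v : EuclideanSpace ℝ (Fin n)), p⟫) (by fun_prop) (by fun_prop)
    hk hHp.eventually_hasDerivAt_comp_add_smul hHp.eventually_hasDerivAt_fderiv_comp_add_smul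
    hHp.continuousAt_fderiv_fderiv_comp_add_smul hδ
    ((tendsto_add_smul_nhds_zero.eventually hδ_le).mono fun t ht v => (hden t v).symm ▸ ht v v.2)
    (C := ν.real Set.univ • (τ / (1 + τ)))
    (by
      filter_upwards [(tendsto_add_smul_nhds_zero (v := ξ)).eventually (hU.mem_nhds hp)] with t ht
      rw [(hdef _ ht).2, measure_smul_average]
      simp_rw [hden, one_div])
  rw [iteratedFDerivWithin_of_isOpen 2 hU hp, iteratedFDeriv_two_apply]
  simpa using key

theorem implicit_hamiltonian_concave (n : ℕ) (hn : 1 ≤ n) (τ : ℝ) (hτ : 0 < τ)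
    (a : ℝ) (ha : a = Real.sqrt (n / τ))
    (U : Set (EuclideanSpace ℝ (Fin n))) (hU : IsOpen U)
    (H : EuclideanSpace ℝ (Fin n) → ℝ)
    (hreg : ContDiffOn ℝ 2 H U)
    (hdef : ∀ p ∈ U, a * ‖p‖ < -H p + 1 / τ ∧
      τ / (1 + τ) =
        ⨍ v : sphere (0 : EuclideanSpace ℝ (Fin n)) 1,
          1 / (-H p + 1 / τ + a * ⟪(v : EuclideanSpace ℝ (Fin n)), p⟫)
          ∂((volume : Measure (EuclideanSpace ℝ (Fin n))).toSphere)) :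
    ∀ p ∈ U, ∀ ξ : EuclideanSpace ℝ (Fin n), ‖ξ‖ = 1 →
      iteratedFDerivWithin ℝ 2 H U p ![ξ, ξ] ≤ 0 :=
  implicit_hamiltonian_concave_general n hn τ a ha U hU H hreg hdef
end
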